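/- arXiv:1106.4332 — 5 statements merged into one kernel-verified Lean document; each statement's English description precedes it below -/
import Mathlib

section
/- Let Λ ≅ ℤ be a free abelian group of rank 1 with generator ω. Identify S*(Λ) with ℤ[ω] and ℤ[Λ] with the Laurent polynomial ring ℤ[x,x⁻¹] via x = e^ω. Let I_a = (ω) and I_m be the ideal generated by the elements 1 - xⁿ for n ∈ ℤ. Then for every i ≥ 0 the map sending x to 1 + ω + ω² + ... + ωⁱ induces a ring isomorphism ℤ[x,x⁻¹]/I_m^{i+1} ≅ ℤ[ω]/I_a^{i+1}, with inverse induced by ω ↦ 1 - x⁻¹. -/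
open LaurentPolynomial Polynomial

/-- The augmentation ideal `I_m` of the Laurent polynomial ring `ℤ[x,x⁻¹] = ℤ[Λ]`
for `Λ ≅ ℤ`: the ideal generated by the elements `1 - xⁿ`, `n ∈ ℤ`. -/
noncomputable def ImLaurent : Ideal (LaurentPolynomial ℤ) :=
  Ideal.span {p | ∃ n : ℤ, p = 1 - LaurentPolynomial.T n}

/-- The augmentation ideal `I_a = (ω)` of `S*(Λ) = ℤ[ω]` for `Λ ≅ ℤ`. -/
noncomputable def IaPoly : Ideal (Polynomial ℤ) :=
  Ideal.span {(Polynomial.X : Polynomial ℤ)}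

/-!
Modulo `ω^{i+1}` the element `1 + ω + ⋯ + ωⁱ` is a unit with inverse `1 - ω`, so
`x ↦ 1 + ω + ⋯ + ωⁱ` defines a ring map out of `ℤ[x,x⁻¹]`. Since `1 + ω + ⋯ + ωⁱ ≡ 1 mod ω`, it
sends every `1 - xⁿ` into `(ω)`, hence kills `I_m^{i+1}`. Conversely `ω ↦ 1 - x⁻¹ ∈ I_m` kills
`ω^{i+1}`. The two maps are mutually inverse: on `ω` because `1 - (1 + ω + ⋯ + ωⁱ)⁻¹ = ω`, and on
`x` because, with `w = 1 - x⁻¹` and `w^{i+1} = 0`, both `x` and `1 + w + ⋯ + wⁱ` are inverse to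
`1 - w = x⁻¹`.
-/

open Finset

section GeomSum

variable {R : Type*} [Ring R] {x : R} {n : ℕ}

def geomSumUnit (hx : x ^ n = 0) : Rˣ where
  val := ∑ k ∈ range n, x ^ k
  inv := 1 - x
  val_inv := by rw [geom_sum_mul_neg, hx, sub_zero]
  inv_val := by rw [mul_neg_geom_sum, hx, sub_zero]

theorem eq_geom_sum_of_mul_one_sub_eq_one (hx : x ^ n = 0) {y : R} (hy : y * (1 - x) = 1) :
    y = ∑ k ∈ range n, x ^ k :=
  calc y = y * ((1 - x) * ∑ k ∈ range n, x ^ k) := by rw [mul_neg_geom_sum, hx, sub_zero, mul_one]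
    _ = ∑ k ∈ range n, x ^ k := by rw [← mul_assoc, hy, one_mul]

end GeomSum

theorem Units.val_zpow_sub_one_mem {R : Type*} [CommRing R] {J : Ideal R} {u : Rˣ}
    (hu : (u : R) - 1 ∈ J) (n : ℤ) : ((u ^ n : Rˣ) : R) - 1 ∈ J := by
  have hmap : Units.map (Ideal.Quotient.mk J : R →* R ⧸ J) u = 1 := Units.ext <| by
    rw [Units.coe_map, Units.val_one, ← map_one (Ideal.Quotient.mk J)]
    exact Ideal.Quotient.eq.mpr hu
  rw [← Ideal.Quotient.eq, map_one]
  calc Ideal.Quotient.mk J ((u ^ n : Rˣ) : R)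
      = ((Units.map (Ideal.Quotient.mk J : R →* R ⧸ J) u ^ n : (R ⧸ J)ˣ) : R ⧸ J) := by
        rw [← map_zpow]; rfl
    _ = 1 := by rw [hmap, one_zpow, Units.val_one]

theorem LaurentPolynomial.ringHom_ext_int {S : Type*} [Semiring S]
    {f g : LaurentPolynomial ℤ →+* S} (h : f (T 1) = g (T 1)) : f = g :=
  IsLocalization.ringHom_ext (Submonoid.powers (X : ℤ[X])) <|
    Polynomial.ringHom_ext' (RingHom.ext_int _ _) (by simpa using h)

theorem Ideal.pow_le_comap_pow {R S : Type*} [CommSemiring R] [CommSemiring S] {f : R →+* S}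
    {I : Ideal R} {J : Ideal S} (h : I ≤ J.comap f) (n : ℕ) : I ^ n ≤ (J ^ n).comap f :=
  (Ideal.pow_right_mono h n).trans (Ideal.le_comap_pow f n)

theorem one_sub_T_neg_one_mem_imLaurent : (1 - T (-1) : ℤ[T;T⁻¹]) ∈ ImLaurent :=
  Ideal.subset_span ⟨-1, rfl⟩

noncomputable def polyToLaurent : ℤ[X] →+* ℤ[T;T⁻¹] :=
  Polynomial.eval₂RingHom (Int.castRingHom _) (1 - T (-1))

theorem iaPoly_le_comap_polyToLaurent : IaPoly ≤ ImLaurent.comap polyToLaurent := by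
  rw [IaPoly, Ideal.span_le, Set.singleton_subset_iff, SetLike.mem_coe, Ideal.mem_comap,
    polyToLaurent, coe_eval₂RingHom, eval₂_X]
  exact one_sub_T_neg_one_mem_imLaurent

section Truncation

variable (i : ℕ)

theorem mk_X_pow_succ_eq_zero : (Ideal.Quotient.mk (IaPoly ^ (i + 1)) X) ^ (i + 1) = 0 := by
  rw [← map_pow, Ideal.Quotient.eq_zero_iff_mem, IaPoly, Ideal.span_singleton_pow]
  exact Ideal.mem_span_singleton_self _

theorem mk_one_sub_T_neg_one_pow_succ_eq_zero :
    (Ideal.Quotient.mk (ImLaurent ^ (i + 1)) (1 - T (-1))) ^ (i + 1) = 0 := by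
  rw [← map_pow, Ideal.Quotient.eq_zero_iff_mem]
  exact Ideal.pow_mem_pow one_sub_T_neg_one_mem_imLaurent _

noncomputable def laurentToTruncPoly : ℤ[T;T⁻¹] →+* ℤ[X] ⧸ IaPoly ^ (i + 1) :=
  LaurentPolynomial.eval₂ (Int.castRingHom _) (geomSumUnit (mk_X_pow_succ_eq_zero i))

theorem imLaurent_le_comap_laurentToTruncPoly :
    ImLaurent ≤
      (Ideal.span {Ideal.Quotient.mk (IaPoly ^ (i + 1)) X}).comap (laurentToTruncPoly i) := by
  rw [ImLaurent, Ideal.span_le]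
  rintro _ ⟨n, rfl⟩
  rw [SetLike.mem_coe, Ideal.mem_comap, map_sub, map_one, laurentToTruncPoly, eval₂_T, ← neg_sub,
    neg_mem_iff]
  refine Units.val_zpow_sub_one_mem ?_ n
  rw [geomSumUnit, Units.val_mk, geom_sum_succ, add_sub_cancel_right]
  exact Ideal.mul_mem_right _ _ (Ideal.mem_span_singleton_self _)

theorem pow_imLaurent_le_ker_laurentToTruncPoly :
    ImLaurent ^ (i + 1) ≤ RingHom.ker (laurentToTruncPoly i) := by
  have := Ideal.pow_le_comap_pow (imLaurent_le_comap_laurentToTruncPoly i) (i + 1)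
  rwa [Ideal.span_singleton_pow, mk_X_pow_succ_eq_zero, Ideal.span_singleton_zero,
    ← RingHom.ker_eq_comap_bot] at this

noncomputable def truncLaurentToTruncPoly :
    ℤ[T;T⁻¹] ⧸ ImLaurent ^ (i + 1) →+* ℤ[X] ⧸ IaPoly ^ (i + 1) :=
  Ideal.Quotient.lift _ (laurentToTruncPoly i) fun _ ha ↦
    RingHom.mem_ker.mp (pow_imLaurent_le_ker_laurentToTruncPoly i ha)

noncomputable def truncPolyToTruncLaurent :
    ℤ[X] ⧸ IaPoly ^ (i + 1) →+* ℤ[T;T⁻¹] ⧸ ImLaurent ^ (i + 1) :=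
  Ideal.quotientMap _ polyToLaurent (Ideal.pow_le_comap_pow iaPoly_le_comap_polyToLaurent _)

theorem truncLaurentToTruncPoly_mk_T (n : ℤ) :
    truncLaurentToTruncPoly i (Ideal.Quotient.mk _ (T n)) =
      ((geomSumUnit (mk_X_pow_succ_eq_zero i) ^ n : (ℤ[X] ⧸ IaPoly ^ (i + 1))ˣ) :
        ℤ[X] ⧸ IaPoly ^ (i + 1)) := by
  rw [truncLaurentToTruncPoly, Ideal.Quotient.lift_mk, laurentToTruncPoly, eval₂_T]

theorem truncPolyToTruncLaurent_mk_X :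
    truncPolyToTruncLaurent i (Ideal.Quotient.mk _ X) = Ideal.Quotient.mk _ (1 - T (-1)) := by
  rw [truncPolyToTruncLaurent, Ideal.quotientMap_mk, polyToLaurent, coe_eval₂RingHom, eval₂_X]

theorem truncPolyToTruncLaurent_comp_truncLaurentToTruncPoly :
    (truncPolyToTruncLaurent i).comp (truncLaurentToTruncPoly i) = RingHom.id _ := by
  refine Ideal.Quotient.ringHom_ext (LaurentPolynomial.ringHom_ext_int ?_)
  have hT : Ideal.Quotient.mk (ImLaurent ^ (i + 1)) (T 1) *
      (1 - Ideal.Quotient.mk _ (1 - T (-1))) = 1 := by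
    rw [map_sub, map_one, sub_sub_cancel, ← map_mul, ← T_add, add_neg_cancel, T_zero, map_one]
  simp only [RingHom.comp_apply, truncLaurentToTruncPoly_mk_T, zpow_one, geomSumUnit, Units.val_mk,
    map_sum, map_pow, truncPolyToTruncLaurent_mk_X, RingHom.id_apply]
  exact (eq_geom_sum_of_mul_one_sub_eq_one (mk_one_sub_T_neg_one_pow_succ_eq_zero i) hT).symm

theorem truncLaurentToTruncPoly_comp_truncPolyToTruncLaurent :
    (truncLaurentToTruncPoly i).comp (truncPolyToTruncLaurent i) = RingHom.id _ := by
  refine Ideal.Quotient.ringHom_ext (Polynomial.ringHom_ext' (RingHom.ext_int _ _) ?_)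
  simp only [RingHom.comp_apply, truncPolyToTruncLaurent_mk_X, map_sub, map_one,
    truncLaurentToTruncPoly_mk_T, zpow_neg_one, geomSumUnit, Units.inv_mk, sub_sub_cancel,
    RingHom.id_apply]

end Truncation

/-- For every `i ≥ 0` there is a ring isomorphism
`ℤ[x,x⁻¹]/I_m^{i+1} ≃ ℤ[ω]/I_a^{i+1}` sending `x` to `1 + ω + ⋯ + ωⁱ`,
whose inverse sends `ω` to `1 - x⁻¹`. -/
theorem truncation_iso_rank_one (i : ℕ) :
    ∃ e : (LaurentPolynomial ℤ ⧸ ImLaurent ^ (i + 1)) ≃+*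
          (Polynomial ℤ ⧸ IaPoly ^ (i + 1)),
      e (Ideal.Quotient.mk (ImLaurent ^ (i + 1)) (LaurentPolynomial.T 1)) =
        Ideal.Quotient.mk (IaPoly ^ (i + 1)) (∑ k ∈ Finset.range (i + 1), Polynomial.X ^ k) ∧
      e.symm (Ideal.Quotient.mk (IaPoly ^ (i + 1)) Polynomial.X) =
        Ideal.Quotient.mk (ImLaurent ^ (i + 1)) (1 - LaurentPolynomial.T (-1)) := by
  refine ⟨.ofRingHom (truncLaurentToTruncPoly i) (truncPolyToTruncLaurent i)
    (truncLaurentToTruncPoly_comp_truncPolyToTruncLaurent i)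
    (truncPolyToTruncLaurent_comp_truncLaurentToTruncPoly i), ?_, truncPolyToTruncLaurent_mk_X i⟩
  simp only [RingEquiv.ofRingHom_apply, truncLaurentToTruncPoly_mk_T, zpow_one, geomSumUnit,
    Units.val_mk, map_sum, map_pow]
end

section
/- Let Λ be a free abelian group of finite rank n with ℤ-basis ω₁,...,ω_n. For every i ≥ 0, the assignment e^{Σ aⱼωⱼ} ↦ ∏ⱼ (1-ωⱼ)^{-aⱼ} (interpreted in the truncated ring) defines a ring isomorphism φᵢ : ℤ[Λ]/I_m^{i+1} → S*(Λ)/I_a^{i+1}, with inverse determined by ωⱼ ↦ 1 - e^{-ωⱼ}. -/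
/-!
In `S*(Λ)/I_a^k` each `ωⱼ` is nilpotent, so `1 - ωⱼ` is a unit and `e^{ωⱼ} ↦ (1 - ωⱼ)⁻¹`
extends to a ring map out of the Laurent polynomial ring `ℤ[Λ]`. It sends every `e^λ - 1`
into the image of `I_a`, whose `k`-th power vanishes, so it kills `I_m^k`. Symmetrically
`ωⱼ ↦ 1 - e^{-ωⱼ}` sends `I_a` into `I_m` and factors through `S*(Λ)/I_a^k`. The two
induced maps are mutually inverse since they are so on the generators `e^{ωⱼ}` and `ωⱼ`.
-/

open AddMonoidAlgebra MvPolynomial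

/-- The augmentation ideal `I_m ⊆ ℤ[Λ]`, `Λ = Fin n →₀ ℤ`: the kernel of `e^λ ↦ 1`,
generated by the elements `e^λ - 1`. -/
noncomputable def ImIdeal (n : ℕ) : Ideal (AddMonoidAlgebra ℤ (Fin n →₀ ℤ)) :=
  Ideal.span {p | ∃ lam : Fin n →₀ ℤ, p = AddMonoidAlgebra.single lam (1 : ℤ) - 1}

/-- The augmentation ideal `I_a = S^{>0}(Λ) ⊆ S*(Λ)`, realized as the ideal of
`MvPolynomial (Fin n) ℤ` generated by the variables. -/
noncomputable def IaIdeal (n : ℕ) : Ideal (MvPolynomial (Fin n) ℤ) :=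
  Ideal.span (Set.range (MvPolynomial.X : Fin n → MvPolynomial (Fin n) ℤ))

theorem Ideal.pow_le_ker_of_map_le {R S : Type*} [CommRing R] [CommRing S] {I : Ideal R}
    {J : Ideal S} {k : ℕ} (f : R →+* S ⧸ J ^ k)
    (h : I.map f ≤ J.map (Ideal.Quotient.mk (J ^ k))) : I ^ k ≤ RingHom.ker f := by
  rw [← Ideal.map_eq_bot_iff_le_ker, Ideal.map_pow, eq_bot_iff]
  calc I.map f ^ k ≤ J.map (Ideal.Quotient.mk (J ^ k)) ^ k := Ideal.pow_right_mono h k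
    _ = ⊥ := by rw [← Ideal.map_pow, Ideal.map_quotient_self]

theorem Ideal.isNilpotent_mk_pow {R : Type*} [CommRing R] {I : Ideal R} {x : R} (hx : x ∈ I)
    (k : ℕ) : IsNilpotent (Ideal.Quotient.mk (I ^ k) x) :=
  ⟨k, by rw [← map_pow, Ideal.Quotient.eq_zero_iff_mem]; exact Ideal.pow_mem_pow hx k⟩

-- The values on `e^{-ωⱼ}` are forced, being inverses of the values on the units `e^{ωⱼ}`.
theorem AddMonoidAlgebra.ringHom_ext_single_single_one {σ R : Type*} [Semiring R]
    {f g : AddMonoidAlgebra ℤ (σ →₀ ℤ) →+* R}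
    (h : ∀ j, f (single (Finsupp.single j 1) 1) = g (single (Finsupp.single j 1) 1)) : f = g := by
  set F := (f : AddMonoidAlgebra ℤ (σ →₀ ℤ) →* R).comp (of ℤ _)
  set G := (g : AddMonoidAlgebra ℤ (σ →₀ ℤ) →* R).comp (of ℤ _)
  suffices hFG : F.toHomUnits = G.toHomUnits from
    ringHom_ext' (RingHom.ext_int _ _)
      (MonoidHom.ext fun x => congrArg Units.val (DFunLike.congr_fun hFG x))
  refine Finsupp.mulHom_ext fun j c => ?_
  have hj : F.toHomUnits (.ofAdd (Finsupp.single j 1)) =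
      G.toHomUnits (.ofAdd (Finsupp.single j 1)) :=
    Units.ext (h j)
  rw [← Finsupp.smul_single_one, ofAdd_zsmul, map_zpow, map_zpow, hj]

section LaurentLift

variable {σ Q : Type*} [CommRing Q] (u : σ → Qˣ)

noncomputable def laurentLiftUnits : Multiplicative (σ →₀ ℤ) →* Qˣ :=
  AddMonoidHom.toMultiplicativeLeft (Finsupp.liftAddHom fun j => zmultiplesHom _ (.ofMul (u j)))

theorem laurentLiftUnits_single (j : σ) (c : ℤ) :
    laurentLiftUnits u (.ofAdd (Finsupp.single j c)) = u j ^ c := by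
  simp [laurentLiftUnits, AddMonoidHom.toMultiplicativeLeft]

-- The evaluation `e^λ ↦ ∏ⱼ (u j) ^ λⱼ` of the Laurent polynomial ring `ℤ[Λ]`.
noncomputable def laurentLift : AddMonoidAlgebra ℤ (σ →₀ ℤ) →+* Q :=
  (AddMonoidAlgebra.lift ℤ Q _ ((Units.coeHom Q).comp (laurentLiftUnits u))).toRingHom

theorem laurentLift_single (l : σ →₀ ℤ) :
    laurentLift u (single l 1) = laurentLiftUnits u (.ofAdd l) := by
  simp [laurentLift]

theorem laurentLift_single_single (j : σ) (c : ℤ) :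
    laurentLift u (single (Finsupp.single j c) 1) = ↑(u j ^ c) := by
  rw [laurentLift_single, laurentLiftUnits_single]

theorem laurentLift_single_neg (j : σ) :
    laurentLift u (single (-Finsupp.single j 1) 1) = ↑(u j)⁻¹ := by
  rw [← Finsupp.single_neg, laurentLift_single_single, zpow_neg_one]

end LaurentLift

theorem X_mem_IaIdeal {n : ℕ} (j : Fin n) : X j ∈ IaIdeal n :=
  Ideal.subset_span (Set.mem_range_self j)

theorem single_sub_one_mem_ImIdeal {n : ℕ} (l : Fin n →₀ ℤ) : single l 1 - 1 ∈ ImIdeal n :=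
  Ideal.subset_span ⟨l, rfl⟩

theorem map_laurentLift_ImIdeal_le {n : ℕ} {Q : Type*} [CommRing Q] (u : Fin n → Qˣ)
    {K : Ideal Q} (hu : ∀ j, Units.map (Ideal.Quotient.mk K : Q →* Q ⧸ K) (u j) = 1) :
    (ImIdeal n).map (laurentLift u) ≤ K := by
  have hK : (Units.map (Ideal.Quotient.mk K : Q →* Q ⧸ K)).comp (laurentLiftUnits u) = 1 :=
    Finsupp.mulHom_ext fun j c => by simp [laurentLiftUnits_single, hu]
  rw [ImIdeal, Ideal.map_span, Ideal.span_le]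
  rintro _ ⟨_, ⟨l, rfl⟩, rfl⟩
  rw [SetLike.mem_coe, ← Ideal.Quotient.eq_zero_iff_mem, map_sub, map_one, laurentLift_single,
    map_sub, map_one]
  have hl := congrArg Units.val (DFunLike.congr_fun hK (.ofAdd l))
  simp only [MonoidHom.comp_apply, Units.coe_map, MonoidHom.one_apply, Units.val_one] at hl
  exact sub_eq_zero.2 hl

section Truncation

variable (n k : ℕ)

noncomputable def oneSubXUnit (j : Fin n) : (MvPolynomial (Fin n) ℤ ⧸ IaIdeal n ^ k)ˣ :=
  (show IsUnit (Ideal.Quotient.mk (IaIdeal n ^ k) (1 - X j)) by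
    simpa using (Ideal.isNilpotent_mk_pow (X_mem_IaIdeal j) k).isUnit_one_sub).unit

theorem coe_oneSubXUnit (j : Fin n) :
    (oneSubXUnit n k j : MvPolynomial (Fin n) ℤ ⧸ IaIdeal n ^ k) =
      Ideal.Quotient.mk (IaIdeal n ^ k) (1 - X j) :=
  IsUnit.unit_spec _

theorem map_laurentLift_oneSubXUnit_inv_ImIdeal_le :
    (ImIdeal n).map (laurentLift fun j => (oneSubXUnit n k j)⁻¹) ≤
      (IaIdeal n).map (Ideal.Quotient.mk (IaIdeal n ^ k)) := by
  refine map_laurentLift_ImIdeal_le _ fun j => ?_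
  have hX : Ideal.Quotient.mk _ (Ideal.Quotient.mk (IaIdeal n ^ k) (X j)) = 0 :=
    Ideal.Quotient.eq_zero_iff_mem.2 (Ideal.mem_map_of_mem _ (X_mem_IaIdeal j))
  rw [map_inv, inv_eq_one]
  ext
  simp [coe_oneSubXUnit, hX]

noncomputable def truncGroupRingToSym :
    AddMonoidAlgebra ℤ (Fin n →₀ ℤ) ⧸ ImIdeal n ^ k →+* MvPolynomial (Fin n) ℤ ⧸ IaIdeal n ^ k :=
  Ideal.Quotient.lift _ (laurentLift fun j => (oneSubXUnit n k j)⁻¹) fun _ ha =>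
    RingHom.mem_ker.1
      (Ideal.pow_le_ker_of_map_le _ (map_laurentLift_oneSubXUnit_inv_ImIdeal_le n k) ha)

noncomputable def oneSubExpNeg :
    MvPolynomial (Fin n) ℤ →+* AddMonoidAlgebra ℤ (Fin n →₀ ℤ) ⧸ ImIdeal n ^ k :=
  eval₂Hom (Int.castRingHom _)
    fun j => 1 - Ideal.Quotient.mk (ImIdeal n ^ k) (single (-Finsupp.single j 1) 1)

theorem map_oneSubExpNeg_IaIdeal_le :
    (IaIdeal n).map (oneSubExpNeg n k) ≤ (ImIdeal n).map (Ideal.Quotient.mk (ImIdeal n ^ k)) := by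
  rw [IaIdeal, Ideal.map_span, Ideal.span_le]
  rintro _ ⟨_, ⟨j, rfl⟩, rfl⟩
  have h := Ideal.mem_map_of_mem (Ideal.Quotient.mk (ImIdeal n ^ k))
    (single_sub_one_mem_ImIdeal (-Finsupp.single j 1))
  rw [SetLike.mem_coe, oneSubExpNeg, eval₂Hom_X', ← neg_sub, ← map_one (Ideal.Quotient.mk _),
    ← map_sub]
  exact neg_mem h

noncomputable def truncSymToGroupRing :
    MvPolynomial (Fin n) ℤ ⧸ IaIdeal n ^ k →+* AddMonoidAlgebra ℤ (Fin n →₀ ℤ) ⧸ ImIdeal n ^ k :=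
  Ideal.Quotient.lift _ (oneSubExpNeg n k) fun _ ha =>
    RingHom.mem_ker.1 (Ideal.pow_le_ker_of_map_le _ (map_oneSubExpNeg_IaIdeal_le n k) ha)

theorem truncGroupRingToSym_mk_single (j : Fin n) :
    truncGroupRingToSym n k (Ideal.Quotient.mk _ (single (Finsupp.single j 1) 1)) =
      ↑(oneSubXUnit n k j)⁻¹ := by
  rw [truncGroupRingToSym, Ideal.Quotient.lift_mk, laurentLift_single_single, zpow_one]

theorem truncGroupRingToSym_mk_single_neg (j : Fin n) :
    truncGroupRingToSym n k (Ideal.Quotient.mk _ (single (-Finsupp.single j 1) 1)) =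
      oneSubXUnit n k j := by
  rw [truncGroupRingToSym, Ideal.Quotient.lift_mk, laurentLift_single_neg, inv_inv]

theorem truncSymToGroupRing_mk_X (j : Fin n) :
    truncSymToGroupRing n k (Ideal.Quotient.mk _ (X j)) =
      1 - Ideal.Quotient.mk _ (single (-Finsupp.single j 1) 1) := by
  rw [truncSymToGroupRing, Ideal.Quotient.lift_mk, oneSubExpNeg, eval₂Hom_X']

theorem truncSymToGroupRing_oneSubXUnit (j : Fin n) :
    truncSymToGroupRing n k (oneSubXUnit n k j) =
      Ideal.Quotient.mk _ (single (-Finsupp.single j 1) 1) := by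
  rw [coe_oneSubXUnit, map_sub, map_sub, map_one, map_one, truncSymToGroupRing_mk_X, sub_sub_cancel]

theorem truncSymToGroupRing_comp_truncGroupRingToSym :
    (truncSymToGroupRing n k).comp (truncGroupRingToSym n k) = RingHom.id _ := by
  refine Ideal.Quotient.ringHom_ext (AddMonoidAlgebra.ringHom_ext_single_single_one fun j => ?_)
  have hinv : truncSymToGroupRing n k ↑(oneSubXUnit n k j)⁻¹ *
      truncSymToGroupRing n k (oneSubXUnit n k j) = 1 := by
    rw [← map_mul, Units.inv_mul, map_one]
  have hexp : Ideal.Quotient.mk (ImIdeal n ^ k) (single (-Finsupp.single j 1) 1) *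
      Ideal.Quotient.mk _ (single (Finsupp.single j 1) 1) = 1 := by
    rw [← map_mul, single_mul_single, neg_add_cancel, one_mul, ← AddMonoidAlgebra.one_def, map_one]
  rw [truncSymToGroupRing_oneSubXUnit] at hinv
  simpa [truncGroupRingToSym_mk_single] using left_inv_eq_right_inv hinv hexp

theorem truncGroupRingToSym_comp_truncSymToGroupRing :
    (truncGroupRingToSym n k).comp (truncSymToGroupRing n k) = RingHom.id _ := by
  refine Ideal.Quotient.ringHom_ext (MvPolynomial.ringHom_ext' (RingHom.ext_int _ _) fun j => ?_)
  simp [truncSymToGroupRing_mk_X, truncGroupRingToSym_mk_single_neg, coe_oneSubXUnit]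

noncomputable def truncGroupRingEquivSym :
    AddMonoidAlgebra ℤ (Fin n →₀ ℤ) ⧸ ImIdeal n ^ k ≃+* MvPolynomial (Fin n) ℤ ⧸ IaIdeal n ^ k :=
  RingEquiv.ofRingHom (truncGroupRingToSym n k) (truncSymToGroupRing n k)
    (truncGroupRingToSym_comp_truncSymToGroupRing n k)
    (truncSymToGroupRing_comp_truncGroupRingToSym n k)

end Truncation

/-- For every `i ≥ 0` there is a ring isomorphism
`φᵢ : ℤ[Λ]/I_m^{i+1} ≃ S*(Λ)/I_a^{i+1}` determined by
`e^{ωⱼ} ↦ (1 - ωⱼ)^{-1}` (equivalently `φᵢ(e^{Σ aⱼωⱼ}) = ∏ⱼ (1-ωⱼ)^{-aⱼ}`),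
with inverse determined by `ωⱼ ↦ 1 - e^{-ωⱼ}`. -/
theorem truncation_iso (n i : ℕ) :
    ∃ e : (AddMonoidAlgebra ℤ (Fin n →₀ ℤ) ⧸ ImIdeal n ^ (i + 1)) ≃+*
          (MvPolynomial (Fin n) ℤ ⧸ IaIdeal n ^ (i + 1)),
      (∀ j : Fin n,
        e (Ideal.Quotient.mk (ImIdeal n ^ (i + 1))
            (AddMonoidAlgebra.single (Finsupp.single j 1) (1 : ℤ)))
          * Ideal.Quotient.mk (IaIdeal n ^ (i + 1)) (1 - MvPolynomial.X j) = 1) ∧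
      (∀ j : Fin n,
        e.symm (Ideal.Quotient.mk (IaIdeal n ^ (i + 1)) (MvPolynomial.X j)) =
          Ideal.Quotient.mk (ImIdeal n ^ (i + 1))
            (1 - AddMonoidAlgebra.single (-(Finsupp.single j 1)) (1 : ℤ))) := by
  refine ⟨truncGroupRingEquivSym n (i + 1), fun j => ?_, fun j => ?_⟩
  · rw [truncGroupRingEquivSym, RingEquiv.ofRingHom_apply, truncGroupRingToSym_mk_single,
      ← coe_oneSubXUnit, Units.inv_mul]
  · rw [truncGroupRingEquivSym, RingEquiv.ofRingHom_symm_apply, truncSymToGroupRing_mk_X,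
      map_sub, map_one]
end

section
/- Let W be a finite group acting ℤ-linearly on a free abelian group Λ of finite rank with Λ^W = 0, and fix χ ∈ Λ. Then 2·φ^{(2)}(ρ(χ)) = Σ_{λ ∈ W(χ)} λ² in S²(Λ), and this element Σ_{λ∈W(χ)} λ² is W-invariant, i.e. Σ_{λ∈W(χ)} λ² ∈ S²(Λ)^W. -/
/-!
The sum of the orbit `W(χ)` is fixed by `W`, hence zero because `Λ^W = 0`; the correction
`Σ_{λ ∈ W(χ)} λ(2) = Σⱼ (Σ_{λ ∈ W(χ)} λ)ⱼ Xⱼ²` therefore vanishes. The substitution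
`Xⱼ ↦ g • ωⱼ` sends the linear form of `λ` to that of `g • λ`, so it permutes the squares
`λ²` over the orbit.
-/

open MvPolynomial

/-- Identify `λ ∈ Λ = Fin n →₀ ℤ` with the linear polynomial `Σⱼ λⱼ Xⱼ ∈ S¹(Λ)`. -/
noncomputable def weightPoly (n : ℕ) (v : Fin n →₀ ℤ) : MvPolynomial (Fin n) ℤ :=
  ∑ j, v j • MvPolynomial.X j

section OrbitSum

variable {G α : Type*} [Group G] [MulAction G α] {χ : α} {O : Finset α}

theorem Finset.smul_mem_iff_of_coe_eq_orbit (hO : (O : Set α) = MulAction.orbit G χ)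
    (g : G) (v : α) : g • v ∈ O ↔ v ∈ O := by
  rw [← Finset.mem_coe, ← Finset.mem_coe, hO, ← MulAction.orbit_eq_iff, ← MulAction.orbit_eq_iff,
    MulAction.orbit_smul]

theorem Finset.sum_comp_smul_of_coe_eq_orbit {M : Type*} [AddCommMonoid M]
    (hO : (O : Set α) = MulAction.orbit G χ) (g : G) (f : α → M) :
    ∑ v ∈ O, f (g • v) = ∑ v ∈ O, f v :=
  Finset.sum_bijective (g • ·) (MulAction.bijective g)
    (fun v => (Finset.smul_mem_iff_of_coe_eq_orbit hO g v).symm) (fun _ _ => rfl)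

end OrbitSum

theorem Finset.sum_eq_zero_of_coe_eq_orbit {G A : Type*} [Group G] [AddCommMonoid A]
    [DistribMulAction G A] (hfix : ∀ v : A, (∀ g : G, g • v = v) → v = 0)
    {χ : A} {O : Finset A} (hO : (O : Set A) = MulAction.orbit G χ) :
    ∑ v ∈ O, v = 0 :=
  hfix _ fun g => by
    rw [Finset.smul_sum]
    exact Finset.sum_comp_smul_of_coe_eq_orbit hO g id

noncomputable def weightPolyHom (n : ℕ) : (Fin n →₀ ℤ) →+ MvPolynomial (Fin n) ℤ where
  toFun := weightPoly n
  map_zero' := by simp [weightPoly]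
  map_add' a b := by simp [weightPoly, add_smul, Finset.sum_add_distrib]

theorem aeval_weightPoly (n : ℕ) (f : (Fin n →₀ ℤ) →+ (Fin n →₀ ℤ)) (v : Fin n →₀ ℤ) :
    aeval (fun j => weightPoly n (f (Finsupp.single j 1))) (weightPoly n v)
      = weightPoly n (f v) := by
  have hom : (aeval (fun j => weightPoly n (f (Finsupp.single j 1)))).toAddMonoidHom.comp
      (weightPolyHom n) = (weightPolyHom n).comp f := by
    refine Finsupp.addHom_ext fun j k => ?_
    have hsingle : Finsupp.single j k = k • Finsupp.single j 1 := by simp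
    simp only [AddMonoidHom.comp_apply, hsingle, map_zsmul]
    simp [weightPolyHom, weightPoly, Finsupp.single_apply]
  exact DFunLike.congr_fun hom v

theorem phi_two_of_orbit_general (n : ℕ) (W : Type*) [Group W]
    [DistribMulAction W (Fin n →₀ ℤ)]
    (hessential : ∀ v : Fin n →₀ ℤ, (∀ g : W, g • v = v) → v = 0)
    (χ : Fin n →₀ ℤ) (O : Finset (Fin n →₀ ℤ))
    (hO : (O : Set (Fin n →₀ ℤ)) = MulAction.orbit W χ) :
    (∑ v ∈ O, ((weightPoly n v) ^ 2 + ∑ j, v j • (MvPolynomial.X j : MvPolynomial (Fin n) ℤ) ^ 2)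
        = ∑ v ∈ O, (weightPoly n v) ^ 2) ∧
    (∀ g : W,
      MvPolynomial.aeval (fun j => weightPoly n (g • Finsupp.single j 1))
          (∑ v ∈ O, (weightPoly n v) ^ 2)
        = ∑ v ∈ O, (weightPoly n v) ^ 2) := by
  have hsum : ∑ v ∈ O, v = 0 := Finset.sum_eq_zero_of_coe_eq_orbit hessential hO
  refine ⟨?_, fun g => ?_⟩
  · have hcorr : ∑ v ∈ O, ∑ j, v j • (X j : MvPolynomial (Fin n) ℤ) ^ 2 = 0 := by
      simp only [Finset.sum_comm (s := O), ← Finset.sum_smul, ← Finsupp.finsetSum_apply, hsum,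
        Finsupp.coe_zero, Pi.zero_apply, zero_smul, Finset.sum_const_zero]
    rw [Finset.sum_add_distrib, hcorr, add_zero]
  · have hsubst := aeval_weightPoly n (DistribSMul.toAddMonoidHom _ g)
    simp only [DistribSMul.toAddMonoidHom_apply] at hsubst
    simp only [map_sum, map_pow, hsubst]
    exact Finset.sum_comp_smul_of_coe_eq_orbit hO g (fun v => weightPoly n v ^ 2)

/-- For an essential `ℤ`-linear action of a finite group `W` on `Λ = Fin n →₀ ℤ`
(`Λ^W = 0`) and `χ ∈ Λ` with orbit finset `O`:
`2·φ^{(2)}(ρ(χ)) = Σ_{λ∈W(χ)} λ²` (i.e. `Σ_{λ∈W(χ)} (λ² + λ(2)) = Σ_{λ∈W(χ)} λ²`,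
since by definition `2φ^{(2)}(e^λ) = λ² + λ(2)`), and `Σ_{λ∈W(χ)} λ²` is a
`W`-invariant quadratic form, i.e. it lies in `S²(Λ)^W` for the induced action of
`W` on `S*(Λ)` (given on variables by `Xⱼ ↦ g•ωⱼ`). -/
theorem phi_two_of_orbit (n : ℕ) (W : Type*) [Group W] [Finite W]
    [DistribMulAction W (Fin n →₀ ℤ)]
    (hessential : ∀ v : Fin n →₀ ℤ, (∀ g : W, g • v = v) → v = 0)
    (χ : Fin n →₀ ℤ) (O : Finset (Fin n →₀ ℤ))
    (hO : (O : Set (Fin n →₀ ℤ)) = MulAction.orbit W χ) :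
    (∑ v ∈ O, ((weightPoly n v) ^ 2 + ∑ j, v j • (MvPolynomial.X j : MvPolynomial (Fin n) ℤ) ^ 2)
        = ∑ v ∈ O, (weightPoly n v) ^ 2) ∧
    (∀ g : W,
      MvPolynomial.aeval (fun j => weightPoly n (g • Finsupp.single j 1))
          (∑ v ∈ O, (weightPoly n v) ^ 2)
        = ∑ v ∈ O, (weightPoly n v) ^ 2) :=
  phi_two_of_orbit_general n W hessential χ O hO
end

section
/- Let W act on a free abelian group Λ of finite rank with Λ^W = 0 and let χ ∈ Λ. Then 6·φ^{(3)}(ρ(χ)) = Σ_{λ∈W(χ)} (λ³ + 3λ(2)λ) in S³(Λ), where λ(2) = Σⱼ a_{j,λ}ωⱼ² for a fixed basis ω₁,...,ω_n. -/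
open MvPolynomial

/-- Identify `λ ∈ Λ = Fin n →₀ ℤ` with `λ(m) = Σⱼ λⱼ Xⱼ^m ∈ S^m(Λ)`. -/
noncomputable def weightPow (n : ℕ) (m : ℕ) (v : Fin n →₀ ℤ) : MvPolynomial (Fin n) ℤ :=
  ∑ j, v j • (MvPolynomial.X j) ^ m

/-- For an essential action (`Λ^W = 0`) of a finite group `W` on `Λ = Fin n →₀ ℤ` and
`χ ∈ Λ` with orbit finset `O`:
`6·φ^{(3)}(ρ(χ)) = Σ_{λ∈W(χ)} (λ³ + 3λ(2)λ)`, i.e. (since by definition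
`6φ^{(3)}(e^λ) = λ³ + 3λ(2)λ + 2λ(3)`) the term `Σ 2λ(3)` drops out. -/
theorem phi_three_of_orbit (n : ℕ) (W : Type*) [Group W] [Finite W]
    [DistribMulAction W (Fin n →₀ ℤ)]
    (hessential : ∀ v : Fin n →₀ ℤ, (∀ g : W, g • v = v) → v = 0)
    (χ : Fin n →₀ ℤ) (O : Finset (Fin n →₀ ℤ))
    (hO : (O : Set (Fin n →₀ ℤ)) = MulAction.orbit W χ) :
    ∑ v ∈ O, ((weightPow n 1 v) ^ 3 + 3 * weightPow n 2 v * weightPow n 1 v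
        + 2 * weightPow n 3 v)
      = ∑ v ∈ O, ((weightPow n 1 v) ^ 3 + 3 * weightPow n 2 v * weightPow n 1 v) := by
  have hmem : ∀ v, v ∈ O ↔ v ∈ MulAction.orbit W χ := by
    intro v
    rw [← hO]; simp
  -- the orbit sum is W-fixed
  have hsum : (∑ v ∈ O, v) = 0 := by
    apply hessential
    intro g
    rw [Finset.smul_sum]
    apply Finset.sum_nbij' (fun v => g • v) (fun v => g⁻¹ • v)
    · intro v hv
      rw [hmem] at hv ⊢
      obtain ⟨h, rfl⟩ := hv
      rw [smul_smul]; exact MulAction.mem_orbit _ _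
    · intro v hv
      rw [hmem] at hv ⊢
      obtain ⟨h, rfl⟩ := hv
      rw [smul_smul]; exact MulAction.mem_orbit _ _
    · intro v _; simp
    · intro v _; simp
    · intro v _; rfl
  -- the cubic term sum vanishes by linearity
  have hcube : (∑ v ∈ O, weightPow n 3 v) = 0 := by
    unfold weightPow
    rw [Finset.sum_comm]
    have : ∀ j : Fin n, (∑ v ∈ O, v j) = 0 := by
      intro j
      have := congrArg (fun f : Fin n →₀ ℤ => f j) hsum
      simpa [Finset.sum_apply'] using this
    refine Finset.sum_eq_zero fun j _ => ?_
    rw [← Finset.sum_smul, this j, zero_smul]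
  rw [Finset.sum_add_distrib, ← Finset.mul_sum, hcube, mul_zero, add_zero]
end

section
/- Let W act on a free abelian group Λ of finite rank with Λ^W = 0 and let χ ∈ Λ. Then 24·φ^{(4)}(ρ(χ)) = Σ_{λ∈W(χ)} (λ⁴ + 6λ(2)λ² + 8λ(3)λ + 3λ(2)²) in S⁴(Λ). -/
open MvPolynomial

/-- Identify `λ ∈ Λ = Fin n →₀ ℤ` with `λ(m) = Σⱼ λⱼ Xⱼ^m ∈ S^m(Λ)`. -/
noncomputable def weightPow' (n : ℕ) (m : ℕ) (v : Fin n →₀ ℤ) : MvPolynomial (Fin n) ℤ :=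
  ∑ j, v j • (MvPolynomial.X j) ^ m

/-!
The only difference between the two sides is `6 Σ_{λ ∈ W(χ)} λ(4)`. Since `λ ↦ λ(4)` is additive,
this is `6 · (Σ_{λ ∈ W(χ)} λ)(4)`, and the orbit sum `Σ_{λ ∈ W(χ)} λ` is `W`-invariant, hence zero
because `Λ^W = 0`.
-/

section OrbitSum

open scoped Pointwise

variable {G M : Type*} [Group G] [AddCommMonoid M] [DistribMulAction G M]

theorem smul_finset_sum_eq_of_coe_eq_orbit {O : Finset M} {x : M}
    (hO : (O : Set M) = MulAction.orbit G x) (g : G) :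
    g • ∑ v ∈ O, v = ∑ v ∈ O, v := by
  classical
  have hgO : g • O = O := Finset.coe_injective <| by
    rw [Finset.coe_smul_finset, hO, MulAction.smul_orbit]
  calc g • ∑ v ∈ O, v = ∑ v ∈ g • O, v := by
        rw [Finset.smul_sum, Finset.smul_finset_def,
          Finset.sum_image fun _ _ _ _ h => smul_left_cancel g h]
    _ = ∑ v ∈ O, v := by rw [hgO]

theorem finset_sum_eq_zero_of_coe_eq_orbit (hfix : ∀ v : M, (∀ g : G, g • v = v) → v = 0)
    {O : Finset M} {x : M} (hO : (O : Set M) = MulAction.orbit G x) :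
    ∑ v ∈ O, v = 0 :=
  hfix _ (smul_finset_sum_eq_of_coe_eq_orbit hO)

end OrbitSum

theorem weightPow'_zero_right (n m : ℕ) : weightPow' n m 0 = 0 := by
  simp [weightPow']

theorem weightPow'_finset_sum (n m : ℕ) (s : Finset (Fin n →₀ ℤ)) :
    ∑ v ∈ s, weightPow' n m v = weightPow' n m (∑ v ∈ s, v) := by
  simp only [weightPow', Finsupp.finsetSum_apply, Finset.sum_smul]
  exact Finset.sum_comm

theorem phi_four_of_orbit_general (n : ℕ) (W : Type*) [Group W]
    [DistribMulAction W (Fin n →₀ ℤ)]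
    (hessential : ∀ v : Fin n →₀ ℤ, (∀ g : W, g • v = v) → v = 0)
    (χ : Fin n →₀ ℤ) (O : Finset (Fin n →₀ ℤ))
    (hO : (O : Set (Fin n →₀ ℤ)) = MulAction.orbit W χ) :
    ∑ v ∈ O, ((weightPow' n 1 v) ^ 4 + 6 * weightPow' n 4 v
        + 6 * weightPow' n 2 v * (weightPow' n 1 v) ^ 2
        + 8 * weightPow' n 3 v * weightPow' n 1 v
        + 3 * (weightPow' n 2 v) ^ 2)
      = ∑ v ∈ O, ((weightPow' n 1 v) ^ 4
        + 6 * weightPow' n 2 v * (weightPow' n 1 v) ^ 2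
        + 8 * weightPow' n 3 v * weightPow' n 1 v
        + 3 * (weightPow' n 2 v) ^ 2) := by
  have hfourth : ∑ v ∈ O, weightPow' n 4 v = 0 := by
    rw [weightPow'_finset_sum,
      finset_sum_eq_zero_of_coe_eq_orbit hessential hO, weightPow'_zero_right]
  simp only [Finset.sum_add_distrib, ← Finset.mul_sum, hfourth]
  ring

/-- For an essential action (`Λ^W = 0`) of a finite group `W` on `Λ = Fin n →₀ ℤ` and
`χ ∈ Λ` with orbit finset `O`:
`24·φ^{(4)}(ρ(χ)) = Σ_{λ∈W(χ)} (λ⁴ + 6λ(2)λ² + 8λ(3)λ + 3λ(2)²)`, i.e. (since by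
definition `24φ^{(4)}(e^λ) = λ⁴ + 6λ(4) + 6λ(2)λ² + 8λ(3)λ + 3λ(2)²`) the term
`Σ 6λ(4)` drops out. -/
theorem phi_four_of_orbit (n : ℕ) (W : Type*) [Group W] [Finite W]
    [DistribMulAction W (Fin n →₀ ℤ)]
    (hessential : ∀ v : Fin n →₀ ℤ, (∀ g : W, g • v = v) → v = 0)
    (χ : Fin n →₀ ℤ) (O : Finset (Fin n →₀ ℤ))
    (hO : (O : Set (Fin n →₀ ℤ)) = MulAction.orbit W χ) :
    ∑ v ∈ O, ((weightPow' n 1 v) ^ 4 + 6 * weightPow' n 4 v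
        + 6 * weightPow' n 2 v * (weightPow' n 1 v) ^ 2
        + 8 * weightPow' n 3 v * weightPow' n 1 v
        + 3 * (weightPow' n 2 v) ^ 2)
      = ∑ v ∈ O, ((weightPow' n 1 v) ^ 4
        + 6 * weightPow' n 2 v * (weightPow' n 1 v) ^ 2
        + 8 * weightPow' n 3 v * weightPow' n 1 v
        + 3 * (weightPow' n 2 v) ^ 2) :=
  phi_four_of_orbit_general n W hessential χ O hO
end
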